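/- (Fixed points of T.) Suppose Assumptions 1, 2, 3 hold, A = B D with B symmetric and B C = C B, and γ > 0. Let T(Z, W) = (P − √C W, √C P + (I − C) W) with P = D·prox_{γg}(B Z) − γ ∇f(prox_{γg}(B Z)). If (Z̃*, W̃*) is a fixed point of T with 1_mᵀ W̃* = 0 (equivalently, W̃* = √C Ỹ* for some Ỹ*), then √C Z̃* = 0 and prox_{γg}(B Z̃*) = 1_m (x*)ᵀ, where x* is the unique minimizer of F + G over ℝ^d. -/

import Mathlib

/-!
A fixed point gives `√C P = C W̃*`, hence `√C Z̃* = √C P - C W̃* = 0`. As the null space of `C`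
is spanned by `1`, `Z̃*` is a consensus matrix `1 zᵀ`, which `B` fixes. The proximal objective at a
consensus point is invariant under permuting rows, so by uniqueness `prox_{γg}(Z̃*) = 1 pᵀ`, and
`p` minimizes `G + ‖· - z‖² / (2γ)`; hence `(z - p) / γ` is a subgradient of `G` at `p`.
Multiplying the first fixed-point equation by `1ᵀ` (note `1ᵀ √C = 0` and `1ᵀ D 1 = 1ᵀ A 1 = m`)
gives `Σᵢ ∇fᵢ(p) = m (p - z) / γ`, i.e. `0 ∈ ∇F(p) + ∂G(p)`. Strong convexity of `F` then gives
`F(x*) + G(x*) ≥ F(p) + G(p) + μ/2 ‖x* - p‖²`, which forces `p = x*`.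
-/

open Matrix

/-- Squared Euclidean norm of a vector in ℝ^d. -/
noncomputable def vecNormSq {d : ℕ} (v : Fin d → ℝ) : ℝ := ∑ j, v j ^ 2

/-- The continuous linear map `u ↦ ⟨v, u⟩` on ℝ^d (used to state that `v` is a gradient). -/
noncomputable def dotCLM {d : ℕ} (v : Fin d → ℝ) : (Fin d → ℝ) →L[ℝ] ℝ :=
  LinearMap.toContinuousLinearMap
    (∑ j, v j • (LinearMap.proj j : (Fin d → ℝ) →ₗ[ℝ] ℝ))

/-- Squared Frobenius norm. -/
noncomputable def frobSq {m d : ℕ} (X : Matrix (Fin m) (Fin d) ℝ) : ℝ :=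
  ∑ i, ∑ j, X i j ^ 2

/-- Frobenius inner product `⟨X, Y⟩_F = trace(Xᵀ Y)`. -/
noncomputable def frobInner {m d : ℕ} (X Y : Matrix (Fin m) (Fin d) ℝ) : ℝ :=
  ∑ i, ∑ j, X i j * Y i j

/-- All ones vector `1_m`. -/
def onesV (m : ℕ) : Fin m → ℝ := fun _ => 1

/-- The consensus matrix `1_m xᵀ` (all rows equal to `x`). -/
def consMat (m : ℕ) {d : ℕ} (x : Fin d → ℝ) : Matrix (Fin m) (Fin d) ℝ :=
  Matrix.of fun _ j => x j

/-- The matrix `∇f(X)` whose `i`-th row is `∇f_i(x_i)`. -/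
noncomputable def gradMat {m d : ℕ} (gradf : Fin m → (Fin d → ℝ) → (Fin d → ℝ))
    (X : Matrix (Fin m) (Fin d) ℝ) : Matrix (Fin m) (Fin d) ℝ :=
  Matrix.of fun i j => gradf i (X i) j

/-- `v` is a subgradient of the extended-valued convex function `G` at `x`. -/
def IsSubgradAt {d : ℕ} (G : (Fin d → ℝ) → EReal) (v x : Fin d → ℝ) : Prop :=
  ∀ u : Fin d → ℝ, G x + (((∑ j, v j * (u j - x j)) : ℝ) : EReal) ≤ G u

/-- Convexity for an extended-real-valued function. -/
def ERealConvexOn {d : ℕ} (G : (Fin d → ℝ) → EReal) : Prop :=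
  ∀ x y : Fin d → ℝ, ∀ a b : ℝ, 0 ≤ a → 0 ≤ b → a + b = 1 →
    G (a • x + b • y) ≤ (a : EReal) * G x + (b : EReal) * G y

/-- `G` is proper: never `⊥` and finite somewhere. -/
def GProper {d : ℕ} (G : (Fin d → ℝ) → EReal) : Prop :=
  (∀ x, G x ≠ ⊥) ∧ (∃ x, G x ≠ ⊤)

/-- `g(X) = Σ_i G(x_i)`. -/
noncomputable def gSum {m d : ℕ} (G : (Fin d → ℝ) → EReal)
    (X : Matrix (Fin m) (Fin d) ℝ) : EReal :=
  ∑ i, G (X i)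

/-- Objective of the proximal subproblem `Y ↦ g(Y) + (1/(2γ))‖Y − Z‖²_F`. -/
noncomputable def proxObj {m d : ℕ} (G : (Fin d → ℝ) → EReal) (γ : ℝ)
    (Z Y : Matrix (Fin m) (Fin d) ℝ) : EReal :=
  gSum G Y + (((1 / (2 * γ) * frobSq (Y - Z)) : ℝ) : EReal)

/-- `P` is the unique minimizer of the proximal subproblem, i.e. `P = prox_{γ g}(Z)`. -/
def IsProx {m d : ℕ} (G : (Fin d → ℝ) → EReal) (γ : ℝ)
    (Z P : Matrix (Fin m) (Fin d) ℝ) : Prop :=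
  (∀ Y, proxObj G γ Z P ≤ proxObj G γ Z Y) ∧
  (∀ Y, (∀ Y', proxObj G γ Z Y ≤ proxObj G γ Z Y') → Y = P)

/-- Largest eigenvalue of a symmetric matrix, via the Rayleigh quotient. -/
noncomputable def lamMax {m : ℕ} (P : Matrix (Fin m) (Fin m) ℝ) : ℝ :=
  sSup {r : ℝ | ∃ z : Fin m → ℝ, vecNormSq z = 1 ∧ r = z ⬝ᵥ (P *ᵥ z)}

/-- Smallest eigenvalue of a symmetric matrix, via the Rayleigh quotient. -/
noncomputable def lamMin {m : ℕ} (P : Matrix (Fin m) (Fin m) ℝ) : ℝ :=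
  sInf {r : ℝ | ∃ z : Fin m → ℝ, vecNormSq z = 1 ∧ r = z ⬝ᵥ (P *ᵥ z)}

/-- Second-smallest eigenvalue `λ₂(C) = min{⟨z, Cz⟩ : ‖z‖ = 1, 1ᵀz = 0}`. -/
noncomputable def lam2 {m : ℕ} (C : Matrix (Fin m) (Fin m) ℝ) : ℝ :=
  sInf {r : ℝ | ∃ z : Fin m → ℝ, vecNormSq z = 1 ∧ (∑ i, z i) = 0 ∧ r = z ⬝ᵥ (C *ᵥ z)}

/-- The positive semidefinite square root of a PSD matrix (Mathlib's former
`Matrix.PosSemidef.sqrt`, removed upstream; restored with its old definition). -/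
noncomputable def Matrix.PosSemidef.sqrt {n : Type*} [Fintype n] [DecidableEq n]
    {A : Matrix n n ℝ} (hA : A.PosSemidef) : Matrix n n ℝ :=
  hA.1.eigenvectorUnitary.1 * diagonal (Real.sqrt ∘ hA.1.eigenvalues) *
    (star hA.1.eigenvectorUnitary : Matrix n n ℝ)

open Filter Topology

namespace Matrix.PosSemidef

variable {n : Type*} [Fintype n] [DecidableEq n] {A : Matrix n n ℝ}

lemma sqrt_mul_self (hA : A.PosSemidef) : hA.sqrt * hA.sqrt = A := by
  set U : Matrix n n ℝ := hA.1.eigenvectorUnitary.1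
  set R := diagonal (Real.sqrt ∘ hA.1.eigenvalues)
  have hU : star U * U = 1 := Unitary.coe_star_mul_self _
  have hR : R * R = diagonal (RCLike.ofReal ∘ hA.1.eigenvalues) := by
    rw [diagonal_mul_diagonal]
    congr 1
    funext i
    simp [Real.mul_self_sqrt (hA.eigenvalues_nonneg i)]
  conv_rhs => rw [hA.1.spectral_theorem, Unitary.conjStarAlgAut_apply]
  calc hA.sqrt * hA.sqrt = U * R * (star U * U) * R * star U := by
        simp only [Matrix.PosSemidef.sqrt, U, R, Matrix.mul_assoc]
    _ = U * (R * R) * star U := by rw [hU, Matrix.mul_one, Matrix.mul_assoc U]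
    _ = _ := by rw [hR]

lemma posSemidef_sqrt (hA : A.PosSemidef) : hA.sqrt.PosSemidef := by
  unfold Matrix.PosSemidef.sqrt
  have hd : (diagonal (Real.sqrt ∘ hA.1.eigenvalues)).PosSemidef :=
    posSemidef_diagonal_iff.mpr fun i => Real.sqrt_nonneg _
  simpa [Matrix.star_eq_conjTranspose] using
    hd.mul_mul_conjTranspose_same (hA.1.eigenvectorUnitary : Matrix n n ℝ)

lemma vecMul_sqrt_eq_zero (hA : A.PosSemidef) {x : n → ℝ} (hx : A *ᵥ x = 0) :
    x ᵥ* hA.sqrt = 0 := by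
  rw [← vecMul_self_mul_conjTranspose_eq_zero, hA.posSemidef_sqrt.1.eq, sqrt_mul_self,
    ← mulVec_transpose, ← conjTranspose_eq_transpose_of_trivial, hA.1.eq, hx]

end Matrix.PosSemidef

section Consensus

variable {m d : ℕ}

lemma onesV_dotProduct_onesV : onesV m ⬝ᵥ onesV m = m := by
  simp [onesV, dotProduct]

lemma consMat_eq_vecMulVec (x : Fin d → ℝ) : consMat m x = vecMulVec (onesV m) x := by
  ext i j
  simp [consMat, vecMulVec_apply, onesV]

lemma mul_consMat {M : Matrix (Fin m) (Fin m) ℝ} (hM : M *ᵥ onesV m = onesV m)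
    (x : Fin d → ℝ) : M * consMat m x = consMat m x := by
  rw [consMat_eq_vecMulVec, mul_vecMulVec, hM]

lemma vecMul_consMat (v : Fin m → ℝ) (x : Fin d → ℝ) :
    v ᵥ* consMat m x = (v ⬝ᵥ onesV m) • x := by
  rw [consMat_eq_vecMulVec, vecMul_vecMulVec]

lemma onesV_vecMul_gradMat (gradf : Fin m → (Fin d → ℝ) → (Fin d → ℝ)) (x : Fin d → ℝ) :
    onesV m ᵥ* gradMat gradf (consMat m x) = ∑ i, gradf i x := by
  ext j
  simp [vecMul, dotProduct, onesV, gradMat]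
  rfl

lemma exists_eq_consMat_of_mul_eq_zero {C : Matrix (Fin m) (Fin m) ℝ}
    (hnull : ∀ z : Fin m → ℝ, C *ᵥ z = 0 ↔ ∃ c : ℝ, z = fun _ => c)
    {Z : Matrix (Fin m) (Fin d) ℝ} (hZ : C * Z = 0) : ∃ x, Z = consMat m x := by
  have hcol : ∀ j, ∃ c : ℝ, (fun i => Z i j) = fun _ => c := fun j =>
    (hnull _).mp <| funext fun i => by
      simpa [mulVec, mul_apply, dotProduct] using congrFun (congrFun hZ i) j
  choose x hx using hcol
  exact ⟨x, Matrix.ext fun i j => congrFun (hx j) i⟩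

end Consensus

section Prox

variable {m d : ℕ} {G : (Fin d → ℝ) → EReal} {γ : ℝ}

lemma proxObj_submatrix (e : Equiv.Perm (Fin m)) (Z Y : Matrix (Fin m) (Fin d) ℝ) :
    proxObj G γ (Z.submatrix e id) (Y.submatrix e id) = proxObj G γ Z Y := by
  have hg : gSum G (Y.submatrix e id) = gSum G Y := Equiv.sum_comp e fun i => G (Y i)
  have hF : frobSq (Y.submatrix e id - Z.submatrix e id) = frobSq (Y - Z) :=
    Equiv.sum_comp e fun i => ∑ j, (Y - Z) i j ^ 2
  rw [proxObj, proxObj, hg, hF]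

lemma IsProx.eq_consMat {z : Fin d → ℝ} {P : Matrix (Fin m) (Fin d) ℝ}
    (h : IsProx G γ (consMat m z) P) (i : Fin m) : P = consMat m (P i) := by
  ext k j
  have hswap : P.submatrix (Equiv.swap i k) id = P := by
    refine h.2 _ fun Y => ?_
    have hinv := proxObj_submatrix (G := G) (γ := γ) (Equiv.swap i k) (consMat m z) P
    rw [show (consMat m z).submatrix (Equiv.swap i k) id = consMat m z from rfl] at hinv
    exact hinv ▸ h.1 Y
  have hrow := congrFun (congrFun hswap i) j
  rw [submatrix_apply, Equiv.swap_apply_left, id] at hrow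
  exact hrow

lemma frobSq_consMat (x : Fin d → ℝ) : frobSq (consMat m x) = m * vecNormSq x := by
  simp [frobSq, vecNormSq, consMat]

lemma proxObj_consMat (z u : Fin d → ℝ) :
    proxObj G γ (consMat m z) (consMat m u)
      = m • (G u + ((1 / (2 * γ) * vecNormSq (u - z) : ℝ) : EReal)) := by
  have hg : gSum G (consMat m u) = m • G u := by
    change ∑ _i : Fin m, G u = _
    simp
  have hF : 1 / (2 * γ) * frobSq (consMat m u - consMat m z)
      = m • (1 / (2 * γ) * vecNormSq (u - z)) := by
    rw [show consMat m u - consMat m z = consMat m (u - z) from rfl, frobSq_consMat, nsmul_eq_mul]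
    ring
  rw [proxObj, hg, hF, EReal.coe_nsmul, nsmul_add]

lemma EReal.le_of_nsmul_le_nsmul {n : ℕ} (hn : n ≠ 0) {a b : EReal} (h : n • a ≤ n • b) :
    a ≤ b := by
  have hn' : (0 : EReal) < n := by exact_mod_cast Nat.pos_of_ne_zero hn
  rw [EReal.nsmul_eq_mul, EReal.nsmul_eq_mul] at h
  have := EReal.div_le_div_right_of_nonneg hn'.le h
  rwa [← EReal.mul_div, ← EReal.mul_div,
    EReal.mul_div_cancel (EReal.natCast_ne_bot n) (EReal.natCast_ne_top n) hn'.ne',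
    EReal.mul_div_cancel (EReal.natCast_ne_bot n) (EReal.natCast_ne_top n) hn'.ne'] at this

lemma IsProx.le_of_consMat (hm : m ≠ 0) {z p : Fin d → ℝ}
    (h : IsProx G γ (consMat m z) (consMat m p)) (u : Fin d → ℝ) :
    G p + ((1 / (2 * γ) * vecNormSq (p - z) : ℝ) : EReal)
      ≤ G u + ((1 / (2 * γ) * vecNormSq (u - z) : ℝ) : EReal) := by
  have := h.1 (consMat m u)
  rw [proxObj_consMat, proxObj_consMat] at this
  exact EReal.le_of_nsmul_le_nsmul hm this

end Prox

section Subgradient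

variable {d : ℕ}

lemma vecNormSq_eq_dotProduct (v : Fin d → ℝ) : vecNormSq v = v ⬝ᵥ v := by
  simp [vecNormSq, dotProduct, sq]

lemma vecNormSq_add_smul (a b : Fin d → ℝ) (t : ℝ) :
    vecNormSq (a + t • b) = vecNormSq a + 2 * t * (a ⬝ᵥ b) + t ^ 2 * vecNormSq b := by
  simp only [vecNormSq_eq_dotProduct, add_dotProduct, dotProduct_add, smul_dotProduct,
    dotProduct_smul, dotProduct_comm b a, smul_eq_mul]
  ring

lemma le_of_forall_le_add_mul {a b k : ℝ} (h : ∀ t : ℝ, 0 < t → t ≤ 1 → a ≤ b + t * k) :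
    a ≤ b := by
  have hlim : Tendsto (fun t : ℝ => b + t * k) (𝓝[>] 0) (𝓝 b) := by
    have : Continuous fun t : ℝ => b + t * k := by fun_prop
    simpa using (this.tendsto 0).mono_left nhdsWithin_le_nhds
  exact ge_of_tendsto hlim (eventually_of_mem (Ioc_mem_nhdsGT one_pos) fun t ht => h t ht.1 ht.2)

lemma isSubgradAt_of_forall_le {G : (Fin d → ℝ) → EReal} (hGp : GProper G)
    (hGc : ERealConvexOn G) {γ : ℝ} {z p : Fin d → ℝ}
    (hmin : ∀ u, G p + ((1 / (2 * γ) * vecNormSq (p - z) : ℝ) : EReal)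
      ≤ G u + ((1 / (2 * γ) * vecNormSq (u - z) : ℝ) : EReal)) :
    IsSubgradAt G (γ⁻¹ • (z - p)) p := by
  obtain ⟨hbot, u₀, hu₀⟩ := hGp
  have hp : G p ≠ ⊤ := fun htop => by
    have := hmin u₀
    rw [htop, EReal.top_add_coe, top_le_iff] at this
    exact EReal.add_ne_top hu₀ (EReal.coe_ne_top _) this
  obtain ⟨gp, hgp⟩ : ∃ r : ℝ, G p = r := ⟨_, (EReal.coe_toReal hp (hbot p)).symm⟩
  intro u
  rcases eq_or_ne (G u) ⊤ with hu | hu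
  · rw [hu]
    exact le_top
  obtain ⟨gu, hgu⟩ : ∃ r : ℝ, G u = r := ⟨_, (EReal.coe_toReal hu (hbot u)).symm⟩
  rw [hgp, hgu, ← EReal.coe_add, EReal.coe_le_coe_iff]
  change gp + (γ⁻¹ • (z - p)) ⬝ᵥ (u - p) ≤ gu
  -- compare `p` with the point `p + t • (u - p)` of the segment `[p, u]`, then let `t → 0`
  refine le_of_forall_le_add_mul (k := 1 / (2 * γ) * vecNormSq (u - p)) fun t ht0 ht1 => ?_
  have hseg : G (p + t • (u - p)) ≤ (((1 - t) * gp + t * gu : ℝ) : EReal) := by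
    have := hGc p u (1 - t) t (by linarith) ht0.le (by ring)
    rw [show (1 - t) • p + t • u = p + t • (u - p) by module, hgp, hgu] at this
    exact this.trans_eq (by norm_cast)
  have key := (hmin (p + t • (u - p))).trans (add_le_add_left hseg _)
  rw [hgp, ← EReal.coe_add, ← EReal.coe_add, EReal.coe_le_coe_iff,
    show p + t • (u - p) - z = (p - z) + t • (u - p) by abel, vecNormSq_add_smul] at key
  rw [smul_dotProduct, smul_eq_mul, ← neg_sub p z, neg_dotProduct]
  have hscaled : t * (gp - γ⁻¹ * ((p - z) ⬝ᵥ (u - p)))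
      ≤ t * (gu + t * (1 / (2 * γ) * vecNormSq (u - p))) := by
    have h2 : γ⁻¹ = 2 * (1 / (2 * γ)) := by ring
    rw [h2]
    linear_combination key
  linarith [le_of_mul_le_mul_left hscaled ht0]

end Subgradient

section FirstOrder

lemma ConvexOn.add_le_of_hasFDerivAt {E : Type*} [NormedAddCommGroup E] [NormedSpace ℝ E]
    {q : E → ℝ} {q' : E →L[ℝ] ℝ} {x : E} (hq : ConvexOn ℝ Set.univ q)
    (hd : HasFDerivAt q q' x) (y : E) : q x + q' (y - x) ≤ q y := by
  set φ : ℝ → ℝ := fun t => q (x + t • (y - x)) with hφ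
  have hφc : ConvexOn ℝ Set.univ φ := by
    have := hq.comp_affineMap (AffineMap.lineMap x y : ℝ →ᵃ[ℝ] E)
    have he : q ∘ AffineMap.lineMap x y = φ := funext fun t => by
      simp [hφ, AffineMap.lineMap_apply_module', add_comm]
    simpa [he] using this
  have hline : HasDerivAt (fun t : ℝ => x + t • (y - x)) (y - x) 0 := by
    simpa using ((hasDerivAt_id (0 : ℝ)).smul_const (y - x)).const_add x
  have hφd : HasDerivAt φ (q' (y - x)) 0 :=
    (by simpa using hd : HasFDerivAt q q' (x + (0 : ℝ) • (y - x))).comp_hasDerivAt 0 hline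
  have := hφc.le_slope_of_hasDerivAt (Set.mem_univ 0) (Set.mem_univ 1) zero_lt_one hφd
  simp [slope_def_field, hφ] at this
  rw [map_sub]
  linarith

end FirstOrder

section StrongConvexity

variable {d : ℕ}

lemma dotCLM_apply (v u : Fin d → ℝ) : dotCLM v u = v ⬝ᵥ u := by
  simp [dotCLM, dotProduct]

lemma hasFDerivAt_vecNormSq (x : Fin d → ℝ) : HasFDerivAt vecNormSq (dotCLM (2 • x)) x := by
  have h := HasFDerivAt.fun_sum (u := Finset.univ) fun j _ =>
    (hasFDerivAt_apply (𝕜 := ℝ) j x).pow 2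
  refine h.congr_fderiv (ContinuousLinearMap.ext fun u => ?_)
  simp [dotCLM_apply, dotProduct, mul_comm]

lemma add_dotProduct_add_vecNormSq_le {μ : ℝ} {f : (Fin d → ℝ) → ℝ} {v x : Fin d → ℝ}
    (hd : HasFDerivAt f (dotCLM v) x)
    (hsc : ConvexOn ℝ Set.univ fun x => f x - μ / 2 * vecNormSq x) (y : Fin d → ℝ) :
    f x + v ⬝ᵥ (y - x) + μ / 2 * vecNormSq (y - x) ≤ f y := by
  have h := hsc.add_le_of_hasFDerivAt (hd.sub ((hasFDerivAt_vecNormSq x).const_mul (μ / 2))) y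
  obtain ⟨w, rfl⟩ : ∃ w, y = x + w := ⟨y - x, by abel⟩
  simp only [_root_.sub_apply, _root_.smul_apply, dotCLM_apply, add_sub_cancel_left,
    vecNormSq_eq_dotProduct, add_dotProduct, dotProduct_add, dotProduct_comm w x, smul_eq_mul,
    two_smul] at h ⊢
  linarith

end StrongConvexity

lemma eq_of_isSubgradAt_of_forall_le {m d : ℕ} (hm : 0 < m) {μ : ℝ} (hμ : 0 < μ)
    {f : Fin m → (Fin d → ℝ) → ℝ} {gradf : Fin m → (Fin d → ℝ) → (Fin d → ℝ)}
    {G : (Fin d → ℝ) → EReal} (hGp : GProper G) {p v xstar : Fin d → ℝ}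
    (hdiff : ∀ i, HasFDerivAt (f i) (dotCLM (gradf i p)) p)
    (hsc : ∀ i, ConvexOn ℝ Set.univ fun x => f i x - μ / 2 * vecNormSq x)
    (hsub : IsSubgradAt G v p) (hstat : ∑ i, gradf i p + (m : ℝ) • v = 0)
    (hxstar : ∀ u : Fin d → ℝ,
      ((((1 / (m : ℝ)) * ∑ i, f i xstar) : ℝ) : EReal) + G xstar ≤
        ((((1 / (m : ℝ)) * ∑ i, f i u) : ℝ) : EReal) + G u) :
    xstar = p := by
  obtain ⟨hbot, u₀, hu₀⟩ := hGp
  have hs : G xstar ≠ ⊤ := fun htop => by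
    have := hxstar u₀
    rw [htop, EReal.coe_add_top, top_le_iff] at this
    exact EReal.add_ne_top (EReal.coe_ne_top _) hu₀ this
  have hp : G p ≠ ⊤ := fun htop => by
    have := hsub xstar
    rw [htop, EReal.top_add_coe, top_le_iff] at this
    exact hs this
  obtain ⟨gs, hgs⟩ : ∃ r : ℝ, G xstar = r := ⟨_, (EReal.coe_toReal hs (hbot xstar)).symm⟩
  obtain ⟨gp, hgp⟩ : ∃ r : ℝ, G p = r := ⟨_, (EReal.coe_toReal hp (hbot p)).symm⟩
  have hG : gp + v ⬝ᵥ (xstar - p) ≤ gs := by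
    have := hsub xstar
    rwa [hgp, hgs, ← EReal.coe_add, EReal.coe_le_coe_iff] at this
  have hmin : (1 / (m : ℝ)) * ∑ i, f i xstar + gs ≤ (1 / (m : ℝ)) * ∑ i, f i p + gp := by
    have := hxstar p
    rwa [hgp, hgs, ← EReal.coe_add, ← EReal.coe_add, EReal.coe_le_coe_iff] at this
  have hF : ∑ i, f i p - (m : ℝ) * v ⬝ᵥ (xstar - p) + m * (μ / 2 * vecNormSq (xstar - p))
      ≤ ∑ i, f i xstar := by
    have := Finset.sum_le_sum fun i (_ : i ∈ Finset.univ) =>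
      add_dotProduct_add_vecNormSq_le (hdiff i) (hsc i) xstar
    rw [Finset.sum_add_distrib, Finset.sum_add_distrib, ← sum_dotProduct,
      eq_neg_of_add_eq_zero_left hstat, neg_dotProduct, smul_dotProduct] at this
    simpa [sub_eq_add_neg] using this
  have hN : vecNormSq (xstar - p) ≤ 0 := by
    have hm' : (0 : ℝ) < m := by exact_mod_cast hm
    field_simp at hmin
    by_contra! hpos
    nlinarith [mul_le_mul_of_nonneg_left hG hm'.le, mul_pos hm' (mul_pos (half_pos hμ) hpos)]
  rw [vecNormSq_eq_dotProduct] at hN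
  exact sub_eq_zero.mp (dotProduct_self_eq_zero.mp (le_antisymm hN (dotProduct_self_star_nonneg _)))

theorem stmt_16_general {m d : ℕ} (μ γ : ℝ) (hμ : 0 < μ) (hγ : 0 < γ)
    (f : Fin m → (Fin d → ℝ) → ℝ) (gradf : Fin m → (Fin d → ℝ) → (Fin d → ℝ))
    (hdiff : ∀ i x, HasFDerivAt (f i) (dotCLM (gradf i x)) x)
    (hsc : ∀ i, ConvexOn ℝ Set.univ fun x => f i x - μ / 2 * vecNormSq x)
    (G : (Fin d → ℝ) → EReal) (hGp : GProper G) (hGc : ERealConvexOn G)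
    (A B C D : Matrix (Fin m) (Fin m) ℝ)
    -- Assumption 2
    (hC : C.PosSemidef)
    (hnull : ∀ z : Fin m → ℝ, C *ᵥ z = 0 ↔ ∃ c : ℝ, z = fun _ => c)
    -- Assumption 3
    (h3a : onesV m ⬝ᵥ (A *ᵥ onesV m) = (m : ℝ))
    (h3b : onesV m ᵥ* B = onesV m)
    (hABD : A = B * D) (hBsym : B.IsSymm)
    -- the proximal operator of γ g
    (prox : Matrix (Fin m) (Fin d) ℝ → Matrix (Fin m) (Fin d) ℝ)
    (hprox : ∀ Z, IsProx G γ Z (prox Z))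
    -- a fixed point of T with 1ᵀ W̃* = 0
    (Zt Wt : Matrix (Fin m) (Fin d) ℝ)
    (hfix₁ : (D * prox (B * Zt) - γ • gradMat gradf (prox (B * Zt))) - hC.sqrt * Wt = Zt)
    (hfix₂ : hC.sqrt * (D * prox (B * Zt) - γ • gradMat gradf (prox (B * Zt)))
        + (1 - C) * Wt = Wt)
    -- x* is the (unique) minimizer of F + G
    (xstar : Fin d → ℝ)
    (hxstar : ∀ u : Fin d → ℝ,
      ((((1 / (m : ℝ)) * ∑ i, f i xstar) : ℝ) : EReal) + G xstar ≤
        ((((1 / (m : ℝ)) * ∑ i, f i u) : ℝ) : EReal) + G u) :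
    hC.sqrt * Zt = 0 ∧ prox (B * Zt) = consMat m xstar := by
  have hSP : hC.sqrt * (D * prox (B * Zt) - γ • gradMat gradf (prox (B * Zt))) = C * Wt := by
    rw [Matrix.sub_mul, Matrix.one_mul] at hfix₂
    simpa using eq_sub_of_add_eq hfix₂
  have hSZ : hC.sqrt * Zt = 0 := by
    rw [← hfix₁, Matrix.mul_sub, ← Matrix.mul_assoc, hC.sqrt_mul_self, hSP, sub_self]
  refine ⟨hSZ, ?_⟩
  rcases Nat.eq_zero_or_pos m with rfl | hm
  · exact Subsingleton.elim _ _
  obtain ⟨z, rfl⟩ := exists_eq_consMat_of_mul_eq_zero hnull <| by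
    rw [← hC.sqrt_mul_self, Matrix.mul_assoc, hSZ, Matrix.mul_zero]
  have hB : B *ᵥ onesV m = onesV m := by rw [← vecMul_transpose, hBsym.eq, h3b]
  obtain ⟨p, hp⟩ : ∃ p, prox (consMat m z) = consMat m p := ⟨_, (hprox _).eq_consMat ⟨0, hm⟩⟩
  rw [mul_consMat hB, hp] at hfix₁ ⊢
  have hD : onesV m ᵥ* D ⬝ᵥ onesV m = m := by
    rwa [hABD, ← mulVec_mulVec, dotProduct_mulVec, h3b, dotProduct_mulVec] at h3a
  have hS : onesV m ᵥ* hC.sqrt = 0 := hC.vecMul_sqrt_eq_zero ((hnull _).mpr ⟨1, rfl⟩)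
  have hstat : ∑ i, gradf i p + (m : ℝ) • γ⁻¹ • (z - p) = 0 := by
    have hsum := congrArg (onesV m ᵥ* ·) hfix₁
    simp only [vecMul_sub, vecMul_smul, ← vecMul_vecMul, hS, zero_vecMul, vecMul_consMat, hD,
      onesV_vecMul_gradMat] at hsum
    rw [sub_zero, onesV_dotProduct_onesV] at hsum
    rw [show (m : ℝ) • γ⁻¹ • (z - p) = γ⁻¹ • ((m : ℝ) • z - (m : ℝ) • p) by module, ← hsum,
      sub_sub_cancel_left, smul_neg, smul_smul, inv_mul_cancel₀ hγ.ne', one_smul, add_neg_cancel]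
  have hsub := isSubgradAt_of_forall_le hGp hGc ((hp ▸ hprox (consMat m z)).le_of_consMat hm.ne')
  exact congrArg (consMat m)
    (eq_of_isSubgradAt_of_forall_le hm hμ hGp (fun i => hdiff i p) hsc hsub hstat hxstar).symm

/-- fixed points of `T` yield the consensus optimal solution. -/
theorem stmt_16 {m d : ℕ} (μ L γ : ℝ) (hμ : 0 < μ) (hμL : μ ≤ L) (hγ : 0 < γ)
    (f : Fin m → (Fin d → ℝ) → ℝ) (gradf : Fin m → (Fin d → ℝ) → (Fin d → ℝ))
    (hdiff : ∀ i x, HasFDerivAt (f i) (dotCLM (gradf i x)) x)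
    (hsc : ∀ i, ConvexOn ℝ Set.univ fun x => f i x - μ / 2 * vecNormSq x)
    (hsmooth : ∀ i x y, vecNormSq (gradf i x - gradf i y) ≤ L ^ 2 * vecNormSq (x - y))
    (G : (Fin d → ℝ) → EReal) (hGp : GProper G) (hGc : ERealConvexOn G)
    (hGl : LowerSemicontinuous G)
    (A B C D : Matrix (Fin m) (Fin m) ℝ)
    -- Assumption 2
    (hC : C.PosSemidef)
    (hnull : ∀ z : Fin m → ℝ, C *ᵥ z = 0 ↔ ∃ c : ℝ, z = fun _ => c)
    -- Assumption 3
    (h3a : onesV m ⬝ᵥ (A *ᵥ onesV m) = (m : ℝ))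
    (h3b : onesV m ᵥ* B = onesV m)
    (hABD : A = B * D) (hBsym : B.IsSymm) (hBC : B * C = C * B)
    -- the proximal operator of γ g
    (prox : Matrix (Fin m) (Fin d) ℝ → Matrix (Fin m) (Fin d) ℝ)
    (hprox : ∀ Z, IsProx G γ Z (prox Z))
    -- a fixed point of T with 1ᵀ W̃* = 0
    (Zt Wt : Matrix (Fin m) (Fin d) ℝ)
    (hfix₁ : (D * prox (B * Zt) - γ • gradMat gradf (prox (B * Zt))) - hC.sqrt * Wt = Zt)
    (hfix₂ : hC.sqrt * (D * prox (B * Zt) - γ • gradMat gradf (prox (B * Zt)))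
        + (1 - C) * Wt = Wt)
    (hWt : onesV m ᵥ* Wt = 0)
    -- x* is the (unique) minimizer of F + G
    (xstar : Fin d → ℝ)
    (hxstar : ∀ u : Fin d → ℝ,
      ((((1 / (m : ℝ)) * ∑ i, f i xstar) : ℝ) : EReal) + G xstar ≤
        ((((1 / (m : ℝ)) * ∑ i, f i u) : ℝ) : EReal) + G u) :
    hC.sqrt * Zt = 0 ∧ prox (B * Zt) = consMat m xstar :=
  stmt_16_general μ γ hμ hγ f gradf hdiff hsc G hGp hGc A B C D hC hnull h3a h3b hABD hBsym prox
    hprox Zt Wt hfix₁ hfix₂ xstar hxstar
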